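/- arXiv:1511.04047 — 3 statements merged into one kernel-verified Lean document; each statement's English description precedes it below -/
import Mathlib

section
/- Let Ω : ℝ² → ℂ be given by Ω(k) = 1 + e^{−i k·ℓ₁} + e^{−i k·ℓ₂} with ℓ₁ = (3/2, −√3/2), ℓ₂ = (3/2, √3/2). Then Ω(k) = 0 if and only if k is congruent, modulo the reciprocal lattice generated by G₁ = (2π/3)(1, −√3) and G₂ = (2π/3)(1, √3), to one of the two Fermi points k_F^± = (2π/3, ±2π/(3√3)). -/
/-!
Writing `θⱼ = k·ℓⱼ`, the equation `1 + e^{-iθ₁} + e^{-iθ₂} = 0` says that three unit vectors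
sum to zero; comparing moduli forces `cos θ₁ = -1/2` and `θ₂ ≡ -θ₁`, so `(θ₁, θ₂)` is
`±(2π/3, -2π/3)` modulo `2π`. Since `Gᵢ·ℓⱼ = 2π δᵢⱼ` and the `Gᵢ` span the plane, two wave
vectors differ by a reciprocal lattice vector exactly when their phases `θ₁, θ₂` agree
modulo `2π`, and the two Fermi points realise the two admissible pairs of phases.
-/

open Real Complex

lemma Real.cos_two_pi_div_three : Real.cos (2 * π / 3) = -(1 / 2) := by
  rw [show 2 * π / 3 = 2 * (π / 3) by ring, Real.cos_two_mul, Real.cos_pi_div_three]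
  norm_num

lemma one_add_exp_add_exp_eq_zero_iff {x y : ℝ} :
    1 + exp (x * I) + exp (y * I) = 0 ↔
      ((x : Angle) = ↑(2 * π / 3) ∧ (y : Angle) = -↑(2 * π / 3)) ∨
        ((x : Angle) = -↑(2 * π / 3) ∧ (y : Angle) = ↑(2 * π / 3)) := by
  rw [Complex.ext_iff]
  simp only [add_re, add_im, one_re, one_im, exp_ofReal_mul_I_re, exp_ofReal_mul_I_im,
    zero_re, zero_im, zero_add]
  constructor
  · rintro ⟨hre, him⟩
    have hcos_y : Real.cos y = -1 - Real.cos x := by linarith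
    have hsin_y : Real.sin y = -Real.sin x := by linarith
    have hcos_x : Real.cos x = Real.cos (2 * π / 3) := by
      have hy := Real.cos_sq_add_sin_sq y
      rw [hcos_y, hsin_y] at hy
      rw [Real.cos_two_pi_div_three]
      linear_combination (hy - Real.cos_sq_add_sin_sq x) / 2
    have hyx : (y : Angle) = -x := by
      rw [← Angle.coe_neg]
      exact Angle.cos_sin_inj (by rw [Real.cos_neg]; linarith [Real.cos_two_pi_div_three])
        (by rw [Real.sin_neg, hsin_y])
    rw [hyx]
    rcases Angle.cos_eq_iff_coe_eq_or_eq_neg.mp hcos_x with h | h <;> simp [h]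
  · rintro (⟨hx, hy⟩ | ⟨hx, hy⟩)
    all_goals
      rw [← Angle.cos_coe, ← Angle.cos_coe, ← Angle.sin_coe, ← Angle.sin_coe, hx, hy]
      simp only [Angle.cos_neg, Angle.sin_neg, Angle.cos_coe, Real.cos_two_pi_div_three]
      constructor <;> ring

namespace Honeycomb

def dot (p q : ℝ × ℝ) : ℝ := p.1 * q.1 + p.2 * q.2

lemma dot_add_left (p p' q : ℝ × ℝ) : dot (p + p') q = dot p q + dot p' q := by
  simp only [dot, Prod.fst_add, Prod.snd_add]; ring

lemma dot_sub_left (p p' q : ℝ × ℝ) : dot (p - p') q = dot p q - dot p' q := by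
  simp only [dot, Prod.fst_sub, Prod.snd_sub]; ring

lemma dot_smul_left (c : ℝ) (p q : ℝ × ℝ) : dot (c • p) q = c * dot p q := by
  simp only [dot, Prod.smul_fst, Prod.smul_snd, smul_eq_mul]; ring

section DualLattice

variable {ℓ₁ ℓ₂ G₁ G₂ : ℝ × ℝ}

lemma exists_eq_add_zsmul_iff_coe_dot_eq
    (h₁₁ : dot G₁ ℓ₁ = 2 * π) (h₁₂ : dot G₁ ℓ₂ = 0) (h₂₁ : dot G₂ ℓ₁ = 0) (h₂₂ : dot G₂ ℓ₂ = 2 * π)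
    (hspan : ∀ w, (2 * π) • w = dot w ℓ₁ • G₁ + dot w ℓ₂ • G₂) (k k₀ : ℝ × ℝ) :
    (∃ n₁ n₂ : ℤ, k = k₀ + (n₁ : ℝ) • G₁ + (n₂ : ℝ) • G₂) ↔
      (dot k ℓ₁ : Angle) = dot k₀ ℓ₁ ∧ (dot k ℓ₂ : Angle) = dot k₀ ℓ₂ := by
  simp only [Angle.angle_eq_iff_two_pi_dvd_sub]
  constructor
  · rintro ⟨n₁, n₂, rfl⟩
    simp only [dot_add_left, dot_smul_left, h₁₁, h₁₂, h₂₁, h₂₂]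
    exact ⟨⟨n₁, by ring⟩, ⟨n₂, by ring⟩⟩
  · rintro ⟨⟨n₁, hn₁⟩, ⟨n₂, hn₂⟩⟩
    refine ⟨n₁, n₂, ?_⟩
    have h : (2 * π) • (k - k₀) = (2 * π) • ((n₁ : ℝ) • G₁ + (n₂ : ℝ) • G₂) := by
      rw [hspan, dot_sub_left, dot_sub_left, hn₁, hn₂, smul_add, smul_smul, smul_smul]
    rw [add_assoc, ← smul_right_injective _ two_pi_pos.ne' h]
    abel

end DualLattice

noncomputable def ℓ₁ : ℝ × ℝ := (3 / 2, -√3 / 2)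
noncomputable def ℓ₂ : ℝ × ℝ := (3 / 2, √3 / 2)
noncomputable def G₁ : ℝ × ℝ := (2 * π / 3, -(2 * π / 3) * √3)
noncomputable def G₂ : ℝ × ℝ := (2 * π / 3, (2 * π / 3) * √3)
noncomputable def kFp : ℝ × ℝ := (2 * π / 3, 2 * π / (3 * √3))
noncomputable def kFm : ℝ × ℝ := (2 * π / 3, -(2 * π / (3 * √3)))

noncomputable def Ω (k : ℝ × ℝ) : ℂ := 1 + exp (-I * (dot k ℓ₁ : ℂ)) + exp (-I * (dot k ℓ₂ : ℂ))

lemma sqrt_three_mul_self : √3 * √3 = 3 := mul_self_sqrt (by norm_num)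

lemma two_pi_smul_eq_dot_smul_add_dot_smul (w : ℝ × ℝ) :
    (2 * π) • w = dot w ℓ₁ • G₁ + dot w ℓ₂ • G₂ := by
  ext <;> simp only [dot, ℓ₁, ℓ₂, G₁, G₂, Prod.smul_fst, Prod.smul_snd, Prod.fst_add,
    Prod.snd_add, smul_eq_mul]
  · ring
  · linear_combination (-(2 * π / 3) * w.2) * sqrt_three_mul_self

lemma exists_eq_add_zsmul_G_iff (k k₀ : ℝ × ℝ) :
    (∃ n₁ n₂ : ℤ, k = k₀ + (n₁ : ℝ) • G₁ + (n₂ : ℝ) • G₂) ↔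
      (dot k ℓ₁ : Angle) = dot k₀ ℓ₁ ∧ (dot k ℓ₂ : Angle) = dot k₀ ℓ₂ := by
  refine exists_eq_add_zsmul_iff_coe_dot_eq ?_ ?_ ?_ ?_
    two_pi_smul_eq_dot_smul_add_dot_smul k k₀ <;> simp only [dot, ℓ₁, ℓ₂, G₁, G₂]
  · linear_combination (π / 3) * sqrt_three_mul_self
  · linear_combination (-(π / 3)) * sqrt_three_mul_self
  · linear_combination (-(π / 3)) * sqrt_three_mul_self
  · linear_combination (π / 3) * sqrt_three_mul_self

-- The phases `4π/3` are written as `-(2π/3) + 2π` so that they reduce to `-(2π/3)` in `Angle`.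
lemma dot_kFp_ℓ₁ : dot kFp ℓ₁ = 2 * π / 3 := by
  simp only [dot, kFp, ℓ₁]
  field_simp
  ring

lemma dot_kFp_ℓ₂ : dot kFp ℓ₂ = -(2 * π / 3) + 2 * π := by
  simp only [dot, kFp, ℓ₂]
  field_simp
  ring

lemma dot_kFm_ℓ₁ : dot kFm ℓ₁ = -(2 * π / 3) + 2 * π := by
  simp only [dot, kFm, ℓ₁]
  field_simp
  ring

lemma dot_kFm_ℓ₂ : dot kFm ℓ₂ = 2 * π / 3 := by
  simp only [dot, kFm, ℓ₂]
  field_simp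
  ring

theorem Ω_eq_zero_iff (k : ℝ × ℝ) :
    Ω k = 0 ↔ ∃ n₁ n₂ : ℤ,
      k = kFp + (n₁ : ℝ) • G₁ + (n₂ : ℝ) • G₂ ∨ k = kFm + (n₁ : ℝ) • G₁ + (n₂ : ℝ) • G₂ := by
  have hΩ : Ω k = 1 + exp (↑(-dot k ℓ₁) * I) + exp (↑(-dot k ℓ₂) * I) := by
    simp only [Ω, ofReal_neg, neg_mul, mul_comm I]
  rw [hΩ, one_add_exp_add_exp_eq_zero_iff]
  simp only [exists_or, exists_eq_add_zsmul_G_iff, dot_kFp_ℓ₁, dot_kFp_ℓ₂, dot_kFm_ℓ₁, dot_kFm_ℓ₂,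
    Angle.coe_add, Angle.coe_two_pi, add_zero, Angle.coe_neg, neg_eq_iff_eq_neg, neg_neg]
  exact or_comm

end Honeycomb

/-- The honeycomb structure function `Ω(k) = 1 + e^{-i k·ℓ₁} + e^{-i k·ℓ₂}` vanishes
if and only if `k` is congruent, modulo the reciprocal lattice generated by
`G₁ = (2π/3)(1,-√3)` and `G₂ = (2π/3)(1,√3)`, to one of the two Fermi points
`k_F^± = (2π/3, ±2π/(3√3))`. -/
theorem haldane_fermi_points (k : ℝ × ℝ) :
    let ℓ₁ : ℝ × ℝ := (3 / 2, -(Real.sqrt 3) / 2)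
    let ℓ₂ : ℝ × ℝ := (3 / 2, Real.sqrt 3 / 2)
    let G₁ : ℝ × ℝ := (2 * Real.pi / 3, -(2 * Real.pi / 3) * Real.sqrt 3)
    let G₂ : ℝ × ℝ := (2 * Real.pi / 3, (2 * Real.pi / 3) * Real.sqrt 3)
    let kFp : ℝ × ℝ := (2 * Real.pi / 3, 2 * Real.pi / (3 * Real.sqrt 3))
    let kFm : ℝ × ℝ := (2 * Real.pi / 3, -(2 * Real.pi / (3 * Real.sqrt 3)))
    let Ω : (ℝ × ℝ) → ℂ := fun q =>
      1 + Complex.exp (-Complex.I * ((q.1 * ℓ₁.1 + q.2 * ℓ₁.2 : ℝ) : ℂ)) +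
        Complex.exp (-Complex.I * ((q.1 * ℓ₂.1 + q.2 * ℓ₂.2 : ℝ) : ℂ))
    (Ω k = 0 ↔ ∃ n₁ n₂ : ℤ,
      k = kFp + (n₁ : ℝ) • G₁ + (n₂ : ℝ) • G₂ ∨
      k = kFm + (n₁ : ℝ) • G₁ + (n₂ : ℝ) • G₂) :=
  Honeycomb.Ω_eq_zero_iff k
end

section
/- Let H(k) be a C¹ family of Hermitian n×n matrices on ℝ², with spectral gap around μ: the spectrum of H(k) never meets (μ−δ, μ+δ) for some δ>0. Let P₋(k) be the spectral projection of H(k) onto eigenvalues below μ and P₊ = 1 − P₋. Define, for t ≥ 0, F(t,k) = Tr( e^{tH(k)} P₋(k) (∂₁P₋)(k) e^{−tH(k)} P₊(k) (∂₂P₋)(k) ) and f(t,k) = Tr( e^{tH(k)} P₋(k) (∂₁H)(k) e^{−tH(k)} P₊(k) (∂₂H)(k) ). Then f(t,k) = ∂²_t F(t,k) for all t ≥ 0. -/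
/-!
Since `e^{±tH}` commutes with `P₋` and `P₊`, cyclicity of the trace replaces `P₋ X` and `P₊ Y` in
`Tr(e^{tH} P₋ X e^{-tH} P₊ Y)` by the off-diagonal blocks `P₋ X P₊` and `P₊ Y P₋`. Each
`t`-derivative brings in a commutator with `H`, and one of the two commutators in `∂ₜ²F` can be
moved across the trace onto the right factor. Differentiating `[H, P₋] = 0` gives
`[H, ∂ᵢP₋] = [P₋, ∂ᵢH]`, so `P₋ (∂₁H) P₊ = [H, P₋ (∂₁P₋) P₊]` and `P₊ (∂₂H) P₋ = [P₊ (∂₂P₋) P₋, H]`,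
which turns `∂ₜ²F` into `f`.
-/

open scoped ComplexOrder

open NormedSpace

section Algebra

variable {R : Type*} [Ring R]

theorem mul_lie_mul_of_commute {P Q A : R} (hP : Commute P A) (hQ : Commute Q A) (X : R) :
    P * ⁅A, X⁆ * Q = ⁅A, P * X * Q⁆ := by
  simp only [Ring.lie_def]
  calc P * (A * X - X * A) * Q = P * A * X * Q - P * X * (A * Q) := by noncomm_ring
    _ = A * P * X * Q - P * X * (Q * A) := by rw [hP.eq, hQ.eq]
    _ = A * (P * X * Q) - P * X * Q * A := by noncomm_ring

theorem IsIdempotentElem.mul_lie_self_mul_one_sub {P : R} (hP : IsIdempotentElem P) (D : R) :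
    P * ⁅P, D⁆ * (1 - P) = P * D * (1 - P) :=
  calc P * ⁅P, D⁆ * (1 - P) = P * P * D * (1 - P) - P * D * (P * (1 - P)) := by
        rw [Ring.lie_def]; noncomm_ring
    _ = P * D * (1 - P) := by rw [hP.eq, hP.mul_one_sub_self, mul_zero, sub_zero]

theorem IsIdempotentElem.one_sub_mul_lie_self_mul {P : R} (hP : IsIdempotentElem P) (D : R) :
    (1 - P) * ⁅P, D⁆ * P = -((1 - P) * D * P) :=
  calc (1 - P) * ⁅P, D⁆ * P = (1 - P) * P * D * P - (1 - P) * D * (P * P) := by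
        rw [Ring.lie_def]; noncomm_ring
    _ = -((1 - P) * D * P) := by rw [hP.eq, hP.one_sub_mul_self, zero_mul, zero_mul, zero_sub]

theorem IsIdempotentElem.mul_mul_one_sub_eq_lie {P A B D : R} (hP : IsIdempotentElem P)
    (hPA : Commute P A) (h : ⁅A, B⁆ = ⁅P, D⁆) : P * D * (1 - P) = ⁅A, P * B * (1 - P)⁆ := by
  rw [← hP.mul_lie_self_mul_one_sub, ← h,
    mul_lie_mul_of_commute hPA (Commute.one_left A |>.sub_left hPA)]

theorem IsIdempotentElem.one_sub_mul_mul_eq_lie {P A B D : R} (hP : IsIdempotentElem P)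
    (hPA : Commute P A) (h : ⁅A, B⁆ = ⁅P, D⁆) : (1 - P) * D * P = ⁅(1 - P) * B * P, A⁆ := by
  rw [← neg_neg ((1 - P) * D * P), ← hP.one_sub_mul_lie_self_mul, ← h,
    mul_lie_mul_of_commute (Commute.one_left A |>.sub_left hPA) hPA, Ring.lie_def, Ring.lie_def,
    neg_sub]

end Algebra

section Exponential

variable {𝕂 𝔸 : Type*} [RCLike 𝕂] [NormedRing 𝔸] [NormedAlgebra 𝕂 𝔸] [CompleteSpace 𝔸]

theorem hasDerivAt_exp_smul_mul_mul_exp_neg_smul (A X : 𝔸) (t : 𝕂) :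
    HasDerivAt (fun s : 𝕂 => exp (s • A) * X * exp (-s • A))
      (exp (t • A) * ⁅A, X⁆ * exp (-t • A)) t := by
  have hneg : HasDerivAt (fun s : 𝕂 => exp (-s • A)) (-(A * exp (-t • A))) t := by
    simpa [Function.comp_def] using (hasDerivAt_exp_smul_const' A (-t)).scomp t (hasDerivAt_neg t)
  convert ((hasDerivAt_exp_smul_const' A t).mul_const X).fun_mul hneg using 1
  rw [((Commute.refl A).smul_right t).exp_right.eq, Ring.lie_def]
  noncomm_ring

end Exponential

namespace Matrix

section Trace

variable {n R : Type*} [Fintype n] [CommRing R]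

theorem trace_mul_idempotent_sandwich {E E' P Q : Matrix n n R} (hP : IsIdempotentElem P)
    (hQ : IsIdempotentElem Q) (hEP : Commute E P) (hE'Q : Commute E' Q) (X Y : Matrix n n R) :
    trace (E * P * X * E' * Q * Y) = trace (E * (P * X * Q) * E' * (Q * Y * P)) :=
  have hEP' : E * P = P * E * P := by conv_lhs => rw [← hP.eq, ← mul_assoc, hEP.eq]
  have hE'Q' : E' * Q = Q * E' * Q := by conv_lhs => rw [← hQ.eq, ← mul_assoc, hE'Q.eq]
  calc trace (E * P * X * E' * Q * Y) = trace ((E * P) * X * (E' * Q) * Y) := by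
        simp only [mul_assoc]
    _ = trace (P * (E * (P * X * Q) * E' * (Q * Y))) := by
        rw [hEP', hE'Q']; simp only [mul_assoc]
    _ = trace (E * (P * X * Q) * E' * (Q * Y * P)) := by
        rw [trace_mul_comm]; simp only [mul_assoc]

theorem trace_mul_lie_mul {A E E' : Matrix n n R} (hE : Commute A E) (hE' : Commute A E')
    (X Y : Matrix n n R) :
    trace (E * ⁅A, X⁆ * E' * Y) = trace (E * X * E' * ⁅Y, A⁆) := by
  have h : trace (E * A * X * E' * Y) = trace (E * X * E' * Y * A) := by
    rw [← hE.eq, mul_assoc A, mul_assoc A, mul_assoc A, trace_mul_comm]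
  calc trace (E * ⁅A, X⁆ * E' * Y)
      = trace (E * A * X * E' * Y) - trace (E * X * (A * E') * Y) := by
        rw [Ring.lie_def, mul_sub, sub_mul, sub_mul, trace_sub]; simp only [mul_assoc]
    _ = trace (E * X * E' * Y * A) - trace (E * X * E' * (A * Y)) := by
        rw [h, hE'.eq]; simp only [mul_assoc]
    _ = trace (E * X * E' * ⁅Y, A⁆) := by
        rw [Ring.lie_def, mul_sub, trace_sub]; simp only [mul_assoc]

end Trace

section Entrywise

variable {𝕜 E R : Type*} [NontriviallyNormedField 𝕜] [NormedAddCommGroup E] [NormedSpace 𝕜 E]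
  [NormedRing R] [NormedAlgebra 𝕜 R]

noncomputable def fderivEntrywise {m n : Type*} (U : E → Matrix m n R) (x v : E) : Matrix m n R :=
  of fun i j => fderiv 𝕜 (fun y => U y i j) x v

theorem fderivEntrywise_mul {m n p : Type*} [Fintype n] {U : E → Matrix m n R}
    {V : E → Matrix n p R} {x : E} (hU : ∀ i j, DifferentiableAt 𝕜 (fun y => U y i j) x)
    (hV : ∀ i j, DifferentiableAt 𝕜 (fun y => V y i j) x) (v : E) :
    fderivEntrywise (𝕜 := 𝕜) (fun y => U y * V y) x v =
      fderivEntrywise (𝕜 := 𝕜) U x v * V x + U x * fderivEntrywise (𝕜 := 𝕜) V x v := by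
  ext i j
  simp only [fderivEntrywise, of_apply, mul_apply, add_apply]
  rw [fderiv_fun_sum fun l _ => (hU i l).fun_mul (hV l j)]
  simp [fderiv_fun_mul' (hU _ _) (hV _ _), Finset.sum_add_distrib, add_comm]

theorem lie_fderivEntrywise_eq_of_commute {n : Type*} [Fintype n] {A B : E → Matrix n n R}
    {x : E} (hA : ∀ i j, DifferentiableAt 𝕜 (fun y => A y i j) x)
    (hB : ∀ i j, DifferentiableAt 𝕜 (fun y => B y i j) x) (hAB : ∀ y, A y * B y = B y * A y)
    (v : E) :
    ⁅A x, fderivEntrywise (𝕜 := 𝕜) B x v⁆ = ⁅B x, fderivEntrywise (𝕜 := 𝕜) A x v⁆ := by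
  have h := congrArg (fun U => fderivEntrywise (𝕜 := 𝕜) U x v) (funext hAB)
  simp only [fderivEntrywise_mul hA hB, fderivEntrywise_mul hB hA] at h
  rw [Ring.lie_def, Ring.lie_def, sub_eq_sub_iff_add_eq_add, add_comm, h, add_comm]

end Entrywise

section Exponential

-- Any submultiplicative norm will do: `exp` and derivatives only depend on the topology.
attribute [local instance] Matrix.linftyOpNormedRing Matrix.linftyOpNormedAlgebra

variable {n 𝕜 : Type*} [Fintype n] [DecidableEq n] [RCLike 𝕜]

theorem hasDerivAt_trace_exp_smul_mul_mul_exp_neg_smul_mul (A X Y : Matrix n n 𝕜) (t : ℝ) :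
    HasDerivAt (fun s : ℝ => trace (exp (s • A) * X * exp (-s • A) * Y))
      (trace (exp (t • A) * ⁅A, X⁆ * exp (-t • A) * Y)) t :=
  (traceLinearMap n ℝ 𝕜).toContinuousLinearMap.hasFDerivAt.comp_hasDerivAt t
    ((hasDerivAt_exp_smul_mul_mul_exp_neg_smul A X t).mul_const Y)

theorem deriv_deriv_trace_exp_smul_mul_mul_exp_neg_smul_mul (A X Y : Matrix n n 𝕜) (t : ℝ) :
    deriv (fun s => deriv (fun u : ℝ => trace (exp (u • A) * X * exp (-u • A) * Y)) s) t =
      trace (exp (t • A) * ⁅A, ⁅A, X⁆⁆ * exp (-t • A) * Y) := by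
  have hderiv : deriv (fun u : ℝ => trace (exp (u • A) * X * exp (-u • A) * Y)) =
      fun s => trace (exp (s • A) * ⁅A, X⁆ * exp (-s • A) * Y) :=
    funext fun s => (hasDerivAt_trace_exp_smul_mul_mul_exp_neg_smul_mul A X Y s).deriv
  rw [hderiv]
  exact (hasDerivAt_trace_exp_smul_mul_mul_exp_neg_smul_mul A ⁅A, X⁆ Y t).deriv

end Exponential

end Matrix

theorem hall_trace_identity_general {n : Type*} [Fintype n] [DecidableEq n]
    (H P : (ℝ × ℝ) → Matrix n n ℂ)
    (hHC1 : ∀ i j : n, ContDiff ℝ 1 fun k => H k i j)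
    (hPC1 : ∀ i j : n, ContDiff ℝ 1 fun k => P k i j)
    (hproj : ∀ k, P k * P k = P k)
    (hcomm : ∀ k, H k * P k = P k * H k) :
    let dP : (ℝ × ℝ) → (ℝ × ℝ) → Matrix n n ℂ := fun k e =>
      Matrix.of fun i j => fderiv ℝ (fun k' => P k' i j) k e
    let dH : (ℝ × ℝ) → (ℝ × ℝ) → Matrix n n ℂ := fun k e =>
      Matrix.of fun i j => fderiv ℝ (fun k' => H k' i j) k e
    let F : ℝ → (ℝ × ℝ) → ℂ := fun t k =>
      (NormedSpace.exp ((t : ℂ) • H k) * P k * dP k (1, 0) *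
        NormedSpace.exp ((-t : ℂ) • H k) * (1 - P k) * dP k (0, 1)).trace
    let f : ℝ → (ℝ × ℝ) → ℂ := fun t k =>
      (NormedSpace.exp ((t : ℂ) • H k) * P k * dH k (1, 0) *
        NormedSpace.exp ((-t : ℂ) • H k) * (1 - P k) * dH k (0, 1)).trace
    ∀ (k : ℝ × ℝ) (t : ℝ), 0 ≤ t →
      f t k = deriv (fun s => deriv (fun u => F u k) s) t := by
  intro dP dH F f k t _
  have hP : IsIdempotentElem (P k) := hproj k
  have hPH : Commute (P k) (H k) := (hcomm k).symm
  have hexpP (s : ℝ) : Commute (exp (s • H k)) (P k) := (hPH.symm.smul_left s).exp_left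
  have hexpQ (s : ℝ) : Commute (exp (s • H k)) (1 - P k) :=
    (Commute.one_right _).sub_right (hexpP s)
  have hexpH (s : ℝ) : Commute (H k) (exp (s • H k)) := ((Commute.refl _).smul_right s).exp_right
  have hsandwich (s : ℝ) (X Y : Matrix n n ℂ) :
      (exp ((s : ℂ) • H k) * P k * X * exp ((-s : ℂ) • H k) * (1 - P k) * Y).trace =
        (exp (s • H k) * (P k * X * (1 - P k)) * exp (-s • H k) * ((1 - P k) * Y * P k)).trace := by
    rw [← Complex.ofReal_neg, Complex.coe_smul, Complex.coe_smul]
    exact Matrix.trace_mul_idempotent_sandwich hP hP.one_sub (hexpP s) (hexpQ (-s)) X Y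
  have hdiff (e : ℝ × ℝ) : ⁅H k, dP k e⁆ = ⁅P k, dH k e⁆ :=
    Matrix.lie_fderivEntrywise_eq_of_commute (fun i j => (hHC1 i j).differentiable one_ne_zero k)
      (fun i j => (hPC1 i j).differentiable one_ne_zero k) hcomm e
  calc f t k
      = (exp (t • H k) * (P k * dH k (1, 0) * (1 - P k)) * exp (-t • H k) *
          ((1 - P k) * dH k (0, 1) * P k)).trace := hsandwich t _ _
    _ = (exp (t • H k) * ⁅H k, ⁅H k, P k * dP k (1, 0) * (1 - P k)⁆⁆ * exp (-t • H k) *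
          ((1 - P k) * dP k (0, 1) * P k)).trace := by
        rw [Matrix.trace_mul_lie_mul (hexpH t) (hexpH (-t)),
          ← hP.mul_mul_one_sub_eq_lie hPH (hdiff _), ← hP.one_sub_mul_mul_eq_lie hPH (hdiff _)]
    _ = deriv (fun s => deriv (fun u => F u k) s) t := by
        simp only [F, hsandwich]
        rw [Matrix.deriv_deriv_trace_exp_smul_mul_mul_exp_neg_smul_mul]

/-- The key identity in the evaluation of the non-interacting Hall conductivity:
for a `C¹` family `H(k)` of Hermitian matrices with a spectral gap `(μ-δ, μ+δ)` and
spectral projection `P₋(k)` onto the eigenvalues below `μ` (characterized by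
`P₋` Hermitian idempotent commuting with `H`, `H P₋ ≤ (μ-δ)P₋` and
`H(1-P₋) ≥ (μ+δ)(1-P₋)`), the functions
`F(t,k) = Tr(e^{tH}P₋(∂₁P₋)e^{-tH}P₊(∂₂P₋))` and
`f(t,k) = Tr(e^{tH}P₋(∂₁H)e^{-tH}P₊(∂₂H))` satisfy `f = ∂ₜ²F` for `t ≥ 0`. -/
theorem hall_trace_identity {n : Type*} [Fintype n] [DecidableEq n]
    (H P : (ℝ × ℝ) → Matrix n n ℂ) (μ δ : ℝ) (hδ : 0 < δ)
    (hHC1 : ∀ i j : n, ContDiff ℝ 1 fun k => H k i j)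
    (hPC1 : ∀ i j : n, ContDiff ℝ 1 fun k => P k i j)
    (hHerm : ∀ k, (H k).IsHermitian) (hPHerm : ∀ k, (P k).IsHermitian)
    (hproj : ∀ k, P k * P k = P k)
    (hcomm : ∀ k, H k * P k = P k * H k)
    (hbelow : ∀ k, (((μ - δ : ℝ) : ℂ) • P k - H k * P k).PosSemidef)
    (habove : ∀ k, (H k * (1 - P k) - ((μ + δ : ℝ) : ℂ) • (1 - P k)).PosSemidef) :
    let dP : (ℝ × ℝ) → (ℝ × ℝ) → Matrix n n ℂ := fun k e =>
      Matrix.of fun i j => fderiv ℝ (fun k' => P k' i j) k e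
    let dH : (ℝ × ℝ) → (ℝ × ℝ) → Matrix n n ℂ := fun k e =>
      Matrix.of fun i j => fderiv ℝ (fun k' => H k' i j) k e
    let F : ℝ → (ℝ × ℝ) → ℂ := fun t k =>
      (NormedSpace.exp ((t : ℂ) • H k) * P k * dP k (1, 0) *
        NormedSpace.exp ((-t : ℂ) • H k) * (1 - P k) * dP k (0, 1)).trace
    let f : ℝ → (ℝ × ℝ) → ℂ := fun t k =>
      (NormedSpace.exp ((t : ℂ) • H k) * P k * dH k (1, 0) *
        NormedSpace.exp ((-t : ℂ) • H k) * (1 - P k) * dH k (0, 1)).trace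
    ∀ (k : ℝ × ℝ) (t : ℝ), 0 ≤ t →
      f t k = deriv (fun s => deriv (fun u => F u k) s) t :=
  hall_trace_identity_general H P hHC1 hPC1 hproj hcomm
end

section
/- Let τ be a finite rooted tree with root at level h and N ≥ 1 leaves (endpoints); for each internal vertex v let s_v be its number of children, h_v its level (the root's unique child v₀ has level h+1, and children have level one more than their parent), n(v) the number of leaves descending from v, and for v ≠ v₀ let v' denote the parent of v. Then Σ_{v internal} h_v(s_v − 1) = h(N − 1) + Σ_{v internal} (h_v − h_{v'})(n(v) − 1), where for v = v₀ we set h_{v'} = h. -/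
open Finset

/-!
Since levels increase by one along each edge, `h_v - h_{v'} = 1` and the right-hand side is
`h (N - 1) + Σ_v (n(v) - 1)`; leaves contribute nothing to the latter sum. Both sides are computed
by regrouping sums over the children of each vertex into one sum over the non-root vertices:
`Σ_v h_v s_v = Σ_{w ≠ v₀} (h_w - 1)` evaluates the left-hand side to `Σ_{leaves} h_ℓ - |V| - h`, and
`Σ_v n(v) = Σ_{leaves} (h_ℓ - h)` (a leaf lies below exactly `h_ℓ - h` vertices, itself included)
evaluates the right-hand side to the same number.
-/

namespace ParentTree

variable {V : Type*} {parent : V → Option V} {lvl : V → ℤ} {h : ℤ}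

theorem level_sub_parent_level (hlvl : ∀ v w, parent v = some w → lvl v = lvl w + 1)
    (hrootlvl : ∀ v, parent v = none → lvl v = h + 1) (v : V) :
    lvl v - (parent v).elim h lvl = 1 := by
  cases hp : parent v with
  | none => simp [hrootlvl v hp]
  | some w => simp [hlvl v w hp]

variable [Fintype V] [DecidableEq V] {v₀ : V}

def children (parent : V → Option V) (v : V) : Finset V :=
  univ.filter fun w => parent w = some v

@[simp]
theorem mem_children {v w : V} : w ∈ children parent v ↔ parent w = some v := by
  simp [children]

theorem sum_sum_children_add_root {M : Type*} [AddCommMonoid M]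
    (hroot : ∀ v, parent v = none ↔ v = v₀) (f : V → M) :
    (∑ v, ∑ w ∈ children parent v, f w) + f v₀ = ∑ v, f v := by
  have hfiber : ∀ w, (∑ v, if parent w = some v then f w else 0) = if w = v₀ then 0 else f w := by
    intro w
    simp only [← hroot w]
    cases parent w <;> simp
  simp only [children, sum_filter]
  rw [sum_comm, sum_congr rfl fun w _ => hfiber w]
  simp [sum_ite, filter_ne', sum_erase_add]

theorem sum_children_level_sub_one_mul (hlvl : ∀ v w, parent v = some w → lvl v = lvl w + 1)
    (v : V) (g : V → ℤ) :
    ∑ w ∈ children parent v, (lvl w - 1) * g w = lvl v * ∑ w ∈ children parent v, g w := by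
  rw [mul_sum]
  refine sum_congr rfl fun w hw => ?_
  rw [hlvl w v (mem_children.mp hw), add_sub_cancel_right]

theorem sum_level_mul_card_children_sub_one (hroot : ∀ v, parent v = none ↔ v = v₀)
    (hlvl : ∀ v w, parent v = some w → lvl v = lvl w + 1) (hrootlvl : lvl v₀ = h + 1) :
    ∑ v, lvl v * ((#(children parent v) : ℤ) - 1) = -(Fintype.card V + h) := by
  have hregroup : ∑ v, ∑ w ∈ children parent v, (lvl w - 1) * 1 + (lvl v₀ - 1) * 1 =
      ∑ v, (lvl v - 1) * 1 :=
    sum_sum_children_add_root hroot _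
  simp only [sum_children_level_sub_one_mul hlvl] at hregroup
  simp only [mul_one, sum_const, nsmul_eq_mul, hrootlvl, sum_sub_distrib, card_univ] at hregroup
  simp only [mul_sub, mul_one, sum_sub_distrib]
  linarith

theorem sum_eq_sum_depth_mul (hroot : ∀ v, parent v = none ↔ v = v₀)
    (hlvl : ∀ v w, parent v = some w → lvl v = lvl w + 1) (hrootlvl : lvl v₀ = h + 1)
    {g a : V → ℤ} (hg : ∀ v, g v = ∑ w ∈ children parent v, g w + a v) :
    ∑ v, g v = ∑ v, (lvl v - h) * a v := by
  have hchildren : ∀ v, ∑ w ∈ children parent v, g w = g v - a v := fun v => by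
    linarith [hg v]
  have hroot_sum : g v₀ = ∑ v, a v := by
    have := sum_sum_children_add_root hroot g
    simp only [hchildren, sum_sub_distrib] at this
    linarith
  have hregroup : ∑ v, ∑ w ∈ children parent v, (lvl w - 1) * g w + (lvl v₀ - 1) * g v₀ =
      ∑ v, (lvl v - 1) * g v :=
    sum_sum_children_add_root hroot _
  simp only [sum_children_level_sub_one_mul hlvl] at hregroup
  simp only [hchildren, hrootlvl, add_sub_cancel_right, hroot_sum, mul_sub, sub_mul, one_mul,
    sum_sub_distrib] at hregroup
  simp only [sub_mul, sum_sub_distrib, ← mul_sum]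
  linarith

end ParentTree

theorem tree_scale_identity_general {V : Type*} [Fintype V] [DecidableEq V]
    (h : ℤ) (parent : V → Option V) (lvl : V → ℤ) (s n : V → ℕ) (N : ℕ)
    (hlvl : ∀ v w : V, parent v = some w → lvl v = lvl w + 1)
    (hroot : ∃! v : V, parent v = none)
    (hrootlvl : ∀ v : V, parent v = none → lvl v = h + 1)
    (hs : ∀ v : V, s v = (univ.filter fun w => parent w = some v).card)
    (hn_leaf : ∀ v : V, s v = 0 → n v = 1)
    (hn_int : ∀ v : V, s v ≠ 0 →
      n v = ∑ w ∈ univ.filter (fun w => parent w = some v), n w)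
    (hN : N = (univ.filter fun v : V => s v = 0).card) :
    ∑ v ∈ univ.filter (fun v : V => s v ≠ 0), lvl v * ((s v : ℤ) - 1) =
      h * ((N : ℤ) - 1) +
        ∑ v ∈ univ.filter (fun v : V => s v ≠ 0),
          (lvl v - (parent v).elim h lvl) * ((n v : ℤ) - 1) := by
  obtain ⟨v₀, hv₀, hv₀_unique⟩ := hroot
  have hroot : ∀ v, parent v = none ↔ v = v₀ := fun v => ⟨hv₀_unique v, fun e => e ▸ hv₀⟩
  have hs' : ∀ v, s v = #(ParentTree.children parent v) := hs
  have hleaves_below : ∀ v, (n v : ℤ) =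
      ∑ w ∈ ParentTree.children parent v, (n w : ℤ) + if s v = 0 then 1 else 0 := by
    intro v
    by_cases hv : s v = 0
    · have : ParentTree.children parent v = ∅ := card_eq_zero.mp (hs' v ▸ hv)
      simp [hv, this, hn_leaf v hv]
    · simp [hv, hn_int v hv, ParentTree.children]
  have hn_sum := ParentTree.sum_eq_sum_depth_mul hroot hlvl (hrootlvl v₀ hv₀) hleaves_below
  have hlvl_sum := ParentTree.sum_level_mul_card_children_sub_one hroot hlvl (hrootlvl v₀ hv₀)
  have hLHS : ∑ v ∈ univ.filter (fun v : V => s v ≠ 0), lvl v * ((s v : ℤ) - 1) =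
      ∑ v, lvl v * ((#(ParentTree.children parent v) : ℤ) - 1) +
        ∑ v ∈ univ.filter (fun v : V => s v = 0), lvl v := by
    rw [sum_filter, sum_filter, ← sum_add_distrib]
    refine sum_congr rfl fun v _ => ?_
    by_cases hv : s v = 0 <;> simp [hv, ← hs']
  have hRHS : ∑ v ∈ univ.filter (fun v : V => s v ≠ 0),
      (lvl v - (parent v).elim h lvl) * ((n v : ℤ) - 1) = ∑ v, ((n v : ℤ) - 1) := by
    rw [sum_filter]
    refine sum_congr rfl fun v _ => ?_
    rw [ParentTree.level_sub_parent_level hlvl hrootlvl, one_mul]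
    by_cases hv : s v = 0 <;> simp [hv, hn_leaf]
  rw [hLHS, hRHS, hlvl_sum, sum_sub_distrib, hn_sum, hN]
  simp only [mul_ite, mul_one, mul_zero, ← sum_filter, sum_sub_distrib, sum_const, card_univ,
    nsmul_eq_mul]
  ring

/-- The scale-counting identity for Gallavotti–Nicolò trees: for a finite rooted
tree with root at level `h` (the root itself excluded from the vertex type `V`;
the unique vertex with no parent is the root's child `v₀`, at level `h+1`),
with `s v` the number of children of `v`, `n v` the number of leaves descending
from `v`, and `lvl v` the level of `v`, one has
`Σ_{v internal} lvl v · (s v - 1) = h·(N-1) + Σ_{v internal} (lvl v - lvl v')·(n v - 1)`,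
where `v'` is the parent of `v` (with `lvl v' := h` for `v = v₀`) and `N` is the
total number of leaves. -/
theorem tree_scale_identity {V : Type*} [Fintype V] [DecidableEq V]
    (h : ℤ) (parent : V → Option V) (lvl : V → ℤ) (s n : V → ℕ) (N : ℕ)
    (hlvl : ∀ v w : V, parent v = some w → lvl v = lvl w + 1)
    (hroot : ∃! v : V, parent v = none)
    (hrootlvl : ∀ v : V, parent v = none → lvl v = h + 1)
    (hs : ∀ v : V, s v = (univ.filter fun w => parent w = some v).card)
    (hn_leaf : ∀ v : V, s v = 0 → n v = 1)
    (hn_int : ∀ v : V, s v ≠ 0 →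
      n v = ∑ w ∈ univ.filter (fun w => parent w = some v), n w)
    (hN : N = (univ.filter fun v : V => s v = 0).card) (hN1 : 1 ≤ N) :
    ∑ v ∈ univ.filter (fun v : V => s v ≠ 0), lvl v * ((s v : ℤ) - 1) =
      h * ((N : ℤ) - 1) +
        ∑ v ∈ univ.filter (fun v : V => s v ≠ 0),
          (lvl v - (parent v).elim h lvl) * ((n v : ℤ) - 1) :=
  tree_scale_identity_general h parent lvl s n N hlvl hroot hrootlvl hs hn_leaf hn_int hN
end
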